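/- Let X ⊆ {0,1}^ℤ be an aperiodic Toeplitz subshift with single holes. Then X is a strong Toeplitz subshift of rank 2. -/

import Mathlib

namespace ToeplitzFR

open Set

variable {A B C : Type*}

/-- The shift map `S` on `ℤ → A`: `S(x)(i) = x(i+1)`. -/
def shift (x : ℤ → A) : ℤ → A := fun i => x (i + 1)

/-- The inverse shift map `S⁻¹`. -/
def shiftInv (x : ℤ → A) : ℤ → A := fun i => x (i - 1)

/-- The shift by `k`: `S^k`. -/
def shiftBy (k : ℤ) (x : ℤ → A) : ℤ → A := fun i => x (i + k)

/-- The finite word `x[i, i+n)`. -/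
def factorAt (x : ℤ → A) (i : ℤ) (n : ℕ) : List A :=
  (List.range n).map fun j => x (i + j)

/-- `x` is a periodic point of the shift. -/
def IsPeriodicPoint (x : ℤ → A) : Prop := ∃ p : ℕ, 0 < p ∧ ∀ i : ℤ, x (i + p) = x i

def IsAperiodicPoint (x : ℤ → A) : Prop := ¬ IsPeriodicPoint x

/-- `Per_p(x)`. -/
def PerSet (x : ℤ → A) (p : ℕ) : Set ℤ := {i : ℤ | ∀ k : ℤ, x (i + k * p) = x i}

/-- `Per(x) = ⋃_{p>1} Per_p(x)`. -/
def PerAll (x : ℤ → A) : Set ℤ := {i : ℤ | ∃ p : ℕ, 1 < p ∧ i ∈ PerSet x p}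

/-- `x` is a Toeplitz sequence. -/
def IsToeplitz (x : ℤ → A) : Prop := ∀ i : ℤ, ∃ p : ℕ, 1 < p ∧ i ∈ PerSet x p

/-- The shift orbit of `x`. -/
def orbit (x : ℤ → A) : Set (ℤ → A) := {y | ∃ k : ℤ, y = shiftBy k x}

/-- `X` is the Toeplitz subshift generated by the Toeplitz sequence `x`. -/
def ToeplitzGenerates [TopologicalSpace A] (x : ℤ → A) (X : Set (ℤ → A)) : Prop :=
  IsToeplitz x ∧ X = closure (orbit x)

/-- `X` is a Toeplitz subshift. -/
def IsToeplitzSubshift [TopologicalSpace A] (X : Set (ℤ → A)) : Prop :=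
  ∃ x : ℤ → A, ToeplitzGenerates x X

/-- The `p`-skeleton of `x`, with `none` as the blank symbol. -/
noncomputable def Skel (x : ℤ → A) (p : ℕ) : ℤ → Option A :=
  fun i => @ite _ (i ∈ PerSet x p) (Classical.dec _) (some (x i)) none

/-- `p` is an essential period of `x`. -/
def IsEssentialPeriod (x : ℤ → A) (p : ℕ) : Prop :=
  1 < p ∧ ∀ q : ℕ, 0 < q → q < p → ∃ i : ℤ, Skel x p (i + q) ≠ Skel x p i

/-- `(P n)` is a period structure for `x`. -/
def IsPeriodStructure (x : ℤ → A) (P : ℕ → ℕ) : Prop :=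
  StrictMono P ∧ (∀ n, IsEssentialPeriod x (P n)) ∧ (∀ n, P n ∣ P (n+1)) ∧
    ∀ i : ℤ, ∃ n, i ∈ PerSet x (P n)

/-- `q` divides the scale of the Toeplitz subshift `X`. -/
def DividesScale [TopologicalSpace A] (X : Set (ℤ → A)) (q : ℕ) : Prop :=
  ∃ (x : ℤ → A) (P : ℕ → ℕ),
    ToeplitzGenerates x X ∧ IsPeriodStructure x P ∧ ∃ n, q ∣ P n

/-! ### Directive sequences and S-adic subshifts -/

/-- All morphisms in the directive sequence are non-erasing. -/
def NonErasing {A : ℕ → Type*} (τ : ∀ n, A (n+1) → List (A n)) : Prop :=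
  ∀ n a, τ n a ≠ []

/-- The directive sequence has constant length. -/
def ConstantLength {A : ℕ → Type*} (τ : ∀ n, A (n+1) → List (A n)) : Prop :=
  ∀ n, ∀ a b : A (n+1), (τ n a).length = (τ n b).length

/-- The directive sequence is proper. -/
def ProperSeq {A : ℕ → Type*} (τ : ∀ n, A (n+1) → List (A n)) : Prop :=
  ∀ n, ∃ b c : A n, ∀ a : A (n+1), (τ n a).head? = some b ∧ (τ n a).getLast? = some c

/-- `sadicWordAux τ n k a = τ_{[n, n+k)}(a)`. -/
def sadicWordAux {A : ℕ → Type*} (τ : ∀ n, A (n+1) → List (A n)) (n : ℕ) :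
    ∀ k : ℕ, A (n + k) → List (A n)
  | 0, a => [a]
  | (k+1), a => (τ (n+k) a).flatMap (sadicWordAux τ n k)

/-- `word0 τ k a = τ_{[0, k)}(a)` for `a ∈ A k`. -/
def word0 {A : ℕ → Type*} (τ : ∀ n, A (n+1) → List (A n)) :
    ∀ k : ℕ, A k → List (A 0)
  | 0, a => [a]
  | (k+1), a => (τ k a).flatMap (word0 τ k)

/-- The directive sequence is primitive. -/
def PrimitiveSeq {A : ℕ → Type*} (τ : ∀ n, A (n+1) → List (A n)) : Prop :=
  ∀ n, ∃ k : ℕ, 0 < k ∧ ∀ (a : A (n+k)) (b : A n), b ∈ sadicWordAux τ n k a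

/-- The `n`-th level `X_τ^{(n)}` of the S-adic system generated by `τ`. -/
def XLevel {A : ℕ → Type*} (τ : ∀ n, A (n+1) → List (A n)) (n : ℕ) :
    Set (ℤ → A n) :=
  {y | ∀ (i : ℤ) (m : ℕ), ∃ k : ℕ, 0 < k ∧ ∃ a : A (n+k),
      (factorAt y i m).IsInfix (sadicWordAux τ n k a)}

/-- The alphabet rank (`liminf_n |A_n|`) is at most `K`. -/
def AlphabetRankLE (A : ℕ → Type*) [∀ n, Fintype (A n)] (K : ℕ) : Prop :=
  ∀ N : ℕ, ∃ n, N ≤ n ∧ Fintype.card (A n) ≤ K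

/-! ### Recognizability -/

/-- `z` is the bi-infinite concatenation `⋯σ(y(-1)).σ(y(0))σ(y(1))⋯`,
with `σ(y(0))` starting at coordinate `0`. -/
def IsConcat (σ : B → List C) (y : ℤ → B) (z : ℤ → C) : Prop :=
  ∃ c : ℤ → ℤ, c 0 = 0 ∧ (∀ j : ℤ, c (j + 1) = c j + (σ (y j)).length) ∧
    ∀ (j : ℤ) (m : Fin (σ (y j)).length), z (c j + (m : ℕ)) = (σ (y j)).get m

/-- `(y, k)` is a centered `σ`-representation of `x` in `Y`. -/
def IsCenteredRep (σ : B → List C) (Y : Set (ℤ → B)) (x : ℤ → C)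
    (y : ℤ → B) (k : ℕ) : Prop :=
  y ∈ Y ∧ k < (σ (y 0)).length ∧ IsConcat σ y (fun m => x (m - k))

/-- The morphism `σ` is recognizable in `Y`. -/
def RecognizableIn (σ : B → List C) (Y : Set (ℤ → B)) : Prop :=
  ∀ (x : ℤ → C) (y y' : ℤ → B) (k k' : ℕ),
    IsCenteredRep σ Y x y k → IsCenteredRep σ Y x y' k' → y = y' ∧ k = k'

/-- The directive sequence `τ` is recognizable. -/
def RecognizableSeq {A : ℕ → Type*} (τ : ∀ n, A (n+1) → List (A n)) : Prop :=
  ∀ n, RecognizableIn (τ n) (XLevel τ (n+1))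

/-! ### Conjugacy -/

/-- `(X, TX)` and `(Y, TY)` are conjugate via a homeomorphism. -/
def ConjugateBy [TopologicalSpace A] [TopologicalSpace B]
    (X : Set (ℤ → A)) (Y : Set (ℤ → B))
    (TX : (ℤ → A) → (ℤ → A)) (TY : (ℤ → B) → (ℤ → B)) : Prop :=
  ∃ φ : ↥X ≃ₜ ↥Y, ∀ (x : ℤ → A) (hx : x ∈ X) (hx' : TX x ∈ X),
    (φ ⟨TX x, hx'⟩).1 = TY (φ ⟨x, hx⟩).1

/-- `(X, S)` and `(Y, S)` are conjugate subshifts. -/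
def Conjugate [TopologicalSpace A] [TopologicalSpace B]
    (X : Set (ℤ → A)) (Y : Set (ℤ → B)) : Prop :=
  ConjugateBy X Y shift shift

/-- `X` is a strong Toeplitz subshift of rank `K`: it is conjugate to the S-adic subshift
of a constant-length, primitive, proper and recognizable directive sequence of
alphabet rank at most `K`. -/
def IsStrongToeplitzOfRank [TopologicalSpace A] (X : Set (ℤ → A)) (K : ℕ) : Prop :=
  ∃ (B : ℕ → Type) (iB : ∀ n, Fintype (B n)) (σ : ∀ n, B (n+1) → List (B n)),
    NonErasing σ ∧ ConstantLength σ ∧ PrimitiveSeq σ ∧ ProperSeq σ ∧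
    RecognizableSeq σ ∧ @AlphabetRankLE B iB K ∧
    @Conjugate A (B 0) _ ⊥ X (XLevel σ 0)

/-- `X` is conjugate to the S-adic subshift of a primitive, proper and recognizable
directive sequence of alphabet rank at most `K`. -/
def HasFiniteRankSAdicRep [TopologicalSpace A] (X : Set (ℤ → A)) (K : ℕ) : Prop :=
  ∃ (B : ℕ → Type) (iB : ∀ n, Fintype (B n)) (σ : ∀ n, B (n+1) → List (B n)),
    NonErasing σ ∧ PrimitiveSeq σ ∧ ProperSeq σ ∧
    RecognizableSeq σ ∧ @AlphabetRankLE B iB K ∧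
    @Conjugate A (B 0) _ ⊥ X (XLevel σ 0)

/-! ### Cuts, languages, built-from -/

/-- The set of words `{x[t+kp, t+(k+1)p) : k ∈ ℤ}`. -/
def cutWords (x : ℤ → A) (p t : ℕ) : Set (List A) :=
  {w | ∃ k : ℤ, w = factorAt x ((t : ℤ) + k * p) p}

/-- `(p, t)` is a strong rank-2 cut of `x`. -/
def StrongRank2Cut (x : ℤ → A) (p t : ℕ) : Prop :=
  t < p ∧ ∃ u v : List A, u ≠ v ∧ cutWords x p t = {u, v}

/-- The language `L_n(X)`. -/
def Lang (n : ℕ) (X : Set (ℤ → A)) : Set (List A) :=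
  {w | ∃ x ∈ X, ∃ i : ℤ, w = factorAt x i n}

/-- The maximal common prefix of `u` and `v` has length greater than `m`. -/
def CommonPrefixLongerThan (u v : List A) (m : ℕ) : Prop :=
  m + 1 ≤ u.length ∧ m + 1 ≤ v.length ∧ u.take (m+1) = v.take (m+1)

/-- The maximal common suffix of `u` and `v` has length greater than `m`. -/
def CommonSuffixLongerThan (u v : List A) (m : ℕ) : Prop :=
  CommonPrefixLongerThan u.reverse v.reverse m

/-- `b = (β₀, (α₁, …, α_k), β₁)` is a building of the word `w` from `W`:
`w = β₀α₁⋯α_kβ₁`, all `αᵢ ∈ W`, `β₀` is a proper suffix of an element of `W`,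
and `β₁` is a proper prefix of an element of `W`. -/
def IsBuilding (W : Set (List A)) (w : List A)
    (b : List A × List (List A) × List A) : Prop :=
  w = b.1 ++ b.2.1.flatten ++ b.2.2 ∧ (∀ α ∈ b.2.1, α ∈ W) ∧
  (∃ u ∈ W, b.1 <:+ u ∧ b.1 ≠ u) ∧ (∃ u ∈ W, b.2.2 <+: u ∧ b.2.2 ≠ u)

/-- `w` is uniquely built from `W`. -/
def UniquelyBuiltFrom (W : Set (List A)) (w : List A) : Prop :=
  ∃! b : List A × List (List A) × List A, IsBuilding W w b

/-- `X` together with one of its points satisfies the strong rank-2 cut property. -/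
def GoodCuts [TopologicalSpace A] (X : Set (ℤ → A)) (x : ℤ → A) : Prop :=
  ∀ p : ℕ, 0 < p → DividesScale X p → ∀ m : ℕ,
    ∃ q t : ℕ, StrongRank2Cut x q t ∧ p ∣ q ∧ DividesScale X q ∧
      ∃ u v : List A, u ≠ v ∧ cutWords x q t = {u, v} ∧
        CommonPrefixLongerThan u v m ∧ CommonSuffixLongerThan u v m

/-! ### Euclidean pairs and buildings of bi-infinite sequences -/

/-- `{u, v}` is a Euclidean pair. -/
def EuclideanPair (u v : List A) : Prop :=
  ∃ (w : List A) (k l : ℕ),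
    u = (List.replicate k w).flatten ∧ v = (List.replicate l w).flatten

/-- `α` is the distinguished prefix of `u` and `v`. -/
def IsDistinguishedPrefix (u v α : List A) : Prop :=
  α.length < u.length + v.length ∧
  ∀ x y : List A,
    (∃ l : List (List A), (∀ w ∈ l, w = u ∨ w = v) ∧ x = u ++ l.flatten) →
    (∃ l : List (List A), (∀ w ∈ l, w = u ∨ w = v) ∧ y = v ++ l.flatten) →
    α.length + 1 ≤ x.length → α.length + 1 ≤ y.length →
    α <+: x ∧ α <+: y ∧ x[α.length]? ≠ y[α.length]?

/-- `β` is the distinguished suffix of `u` and `v`. -/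
def IsDistinguishedSuffix (u v β : List A) : Prop :=
  IsDistinguishedPrefix u.reverse v.reverse β.reverse

/-- `(c, f)` is a building of the bi-infinite sequence `x` from `W`:
block `j` starts at position `c j` and carries the word `f j ∈ W`. -/
def IsBuildingSeq (W : Set (List A)) (x : ℤ → A) (c : ℤ → ℤ) (f : ℤ → List A) : Prop :=
  (∀ j : ℤ, f j ∈ W) ∧ (∀ j : ℤ, c (j + 1) = c j + (f j).length) ∧
  ∀ (j : ℤ) (m : Fin (f j).length), x (c j + (m : ℕ)) = (f j).get m

/-- The subshift `X_{u,v}` of all sequences built from `{u, v}`. -/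
def Xuv (u v : List A) : Set (ℤ → A) :=
  {x | ∃ (c : ℤ → ℤ) (f : ℤ → List A), IsBuildingSeq {u, v} x c f}

/-! ### Block-code conjugacies -/

/-- A conjugacy `φ : X → Y` admitting block width `2n+1`. -/
structure BlockConjugacy (A : Type*) (X Y : Set (ℤ → A)) (n : ℕ) where
  toFun : (ℤ → A) → (ℤ → A)
  invFun : (ℤ → A) → (ℤ → A)
  maps_to : ∀ x ∈ X, toFun x ∈ Y
  maps_from : ∀ y ∈ Y, invFun y ∈ X
  left_inv : ∀ x ∈ X, invFun (toFun x) = x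
  right_inv : ∀ y ∈ Y, toFun (invFun y) = y
  shift_comm : ∀ x ∈ X, toFun (shift x) = shift (toFun x)
  code : List A → A
  code_inv : List A → A
  code_spec : ∀ x ∈ X, ∀ i : ℤ, toFun x i = code (factorAt x (i - n) (2*n+1))
  code_inv_spec : ∀ y ∈ Y, ∀ i : ℤ, invFun y i = code_inv (factorAt y (i - n) (2*n+1))

/-! ### Parts, permutation action, χ -/

/-- `W` is a member of `Parts(X, p)`: a class of the common-`p`-skeleton relation. -/
def SkelClass (X : Set (ℤ → A)) (p : ℕ) (W : Set (ℤ → A)) : Prop :=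
  ∃ y ∈ X, W = {z ∈ X | Skel z p = Skel y p}

/-- The map `ψ̂` induced by a permutation `ψ` of `A^p`. -/
def permHat (p : ℕ) (ψ : Equiv.Perm (Fin p → A)) (x : ℤ → A) : ℤ → A :=
  fun i =>
    if h : (i.emod p).toNat < p then
      ψ (fun m : Fin p => x (i - i.emod p + (m : ℕ))) ⟨(i.emod p).toNat, h⟩
    else x i

/-- The relation `E_p` on compact subsets of `A^ℤ`. -/
def EpRel (p : ℕ) (K L : Set (ℤ → A)) : Prop :=
  ∃ ψ : Equiv.Perm (Fin p → A), L = permHat p ψ '' K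

/-- `W ∈ Parts_*(X, p)`. -/
def SkelClassStar (X : Set (ℤ → A)) (p : ℕ) (W : Set (ℤ → A)) : Prop :=
  SkelClass X p W ∧ ∀ y ∈ W, Skel y p (-1) = none ∧ Skel y p 0 ≠ none

/-- `length(W) = L` for `W ∈ Parts_*(X, p)`. -/
def HasLength (p : ℕ) (W : Set (ℤ → A)) (L : ℕ) : Prop :=
  ∀ y ∈ W, (∀ i : ℕ, i < L → Skel y p (i : ℤ) ≠ none) ∧ Skel y p (L : ℤ) = none

/-- `Z ∈ χ(X, p)`. -/
def ChiMem (X : Set (ℤ → A)) (p : ℕ) (Z : Set (ℤ → A)) : Prop :=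
  ∃ (W : Set (ℤ → A)) (L : ℕ), SkelClassStar X p W ∧ HasLength p W L ∧
    (∀ (W' : Set (ℤ → A)) (L' : ℕ),
      SkelClassStar X p W' → HasLength p W' L' → L' ≤ L) ∧
    Z = shiftBy ((L / 2 : ℕ) : ℤ) '' W

/-- `χ(X, p) E_p^fin χ(Y, p)`. -/
def ChiEpFin (X Y : Set (ℤ → A)) (p : ℕ) : Prop :=
  (∀ K, ChiMem X p K → ∃ L, ChiMem Y p L ∧ EpRel p K L) ∧
  (∀ L, ChiMem Y p L → ∃ K, ChiMem X p K ∧ EpRel p K L)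

/-! ### Single holes and fillings -/

/-- The Toeplitz sequence `x` has single holes with respect to the period structure `P`. -/
def SingleHoles (x : ℤ → A) (P : ℕ → ℕ) : Prop :=
  IsPeriodStructure x P ∧
  ∀ n, ∃! i : ℤ, 0 ≤ i ∧ i < (P n : ℤ) ∧ i ∉ PerSet x (P n)

/-- The Toeplitz subshift `X` has single holes. -/
def HasSingleHoles [TopologicalSpace A] (X : Set (ℤ → A)) : Prop :=
  ∃ (x : ℤ → A) (P : ℕ → ℕ), ToeplitzGenerates x X ∧ SingleHoles x P

/-- `w` is the `(n, m)`-filling of `x` (for periods `pn < pm`). -/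
def IsFilling (x : ℤ → A) (pn pm : ℕ) (w : List A) : Prop :=
  w.length = pm / pn - 1 ∧
  ∀ h : ℤ, 0 ≤ h → h < (pm : ℤ) → h ∉ PerSet x pm →
    ∀ (j : ℕ) (hj : j < w.length), w.get ⟨j, hj⟩ = x (h + (j+1) * pn)

/-- `u` is a `θ`-palindrome. -/
def ThetaPalindrome (θ : Equiv.Perm A) (u : List A) : Prop :=
  u.map (fun a => θ a) = u.reverse

/-! ### Nice symmetries -/

/-- `x` has nice symmetries with respect to `(p, q)`. -/
def NiceSymmetries (x : ℤ → A) (p q : ℕ) : Prop :=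
  ∃ m : ℤ, 1 < m ∧ m ≤ (q : ℤ) + 1 ∧
    (∀ k : ℕ, k < q / p →
      (Set.Ico ((k * p : ℕ) : ℤ) (((k+1) * p : ℕ) : ℤ) ⊆ PerSet x q ↔
       Set.Ico (m - ((k+1) * p : ℕ)) (m - (k * p : ℕ)) ⊆ PerSet x q)) ∧
    (∀ k k' : ℕ, k < q / p → k' < q / p →
      Set.Ico ((k * p : ℕ) : ℤ) (((k+1) * p : ℕ) : ℤ) ⊆ PerSet x q →
      Set.Ico ((k' * p : ℕ) : ℤ) (((k'+1) * p : ℕ) : ℤ) ⊆ PerSet x q →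
      (factorAt x ((k * p : ℕ) : ℤ) p = factorAt x ((k' * p : ℕ) : ℤ) p ↔
       factorAt x (m - ((k+1) * p : ℕ)) p = factorAt x (m - ((k'+1) * p : ℕ)) p))

/-- For some `p` dividing the scale of `X`, `x` has nice symmetries with respect to
`(p, q)` for all `q > p` with `p ∣ q` dividing the scale of `X`. -/
def NiceSymAll [TopologicalSpace A] (X : Set (ℤ → A)) (x : ℤ → A) : Prop :=
  ∃ p : ℕ, 0 < p ∧ DividesScale X p ∧
    ∀ q : ℕ, p < q → p ∣ q → DividesScale X q → NiceSymmetries x p q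

/-- A pair `(x, x')` is a centered left asymptotic pair. -/
def CenteredLeftAsymptoticPair (x x' : ℤ → A) : Prop :=
  (∀ i : ℤ, i < 0 → x i = x' i) ∧ x 0 ≠ x' 0

/-! ### Automorphism groups -/

/-- `e` is an automorphism of the subshift `(X, S)`. -/
def IsShiftAutomorphism [TopologicalSpace A] (X : Set (ℤ → A)) (e : ↥X ≃ₜ ↥X) : Prop :=
  ∀ (x : ℤ → A) (hx : x ∈ X) (hx' : shift x ∈ X),
    (e ⟨shift x, hx'⟩).1 = shift (e ⟨x, hx⟩).1

/-- The automorphism group of `(X, S)` is isomorphic, as a group, to `ℤ × ℤ/nℤ`. -/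
def AutGroupIsoZxZmod [TopologicalSpace A] (X : Set (ℤ → A)) (n : ℕ) : Prop :=
  ∃ Φ : {e : ↥X ≃ₜ ↥X // IsShiftAutomorphism X e} → ℤ × ZMod n,
    Function.Bijective Φ ∧
    ∀ e f g : {e : ↥X ≃ₜ ↥X // IsShiftAutomorphism X e},
      (∀ z : ↥X, g.1 z = e.1 (f.1 z)) → Φ g = Φ e + Φ f

/-! ### The Polish space of subshifts over `ℤ` -/

/-- A point of the space `𝐒` of all (compact, nonempty, shift-invariant) subshifts
over finite alphabets contained in `ℤ`. -/
structure SubshiftSpace : Type where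
  carrier : Set (ℤ → ℤ)
  nonempty : carrier.Nonempty
  compact : IsCompact carrier
  invariant : shift '' carrier = carrier

/-- The topology on `𝐒` induced by the languages `(L_n(X))_{n}`, with each
family of `n`-languages discrete; this coincides with the metric
`d(X,Y) = 2^{-min{n : L_n(X) ≠ L_n(Y)}}`. -/
instance : TopologicalSpace SubshiftSpace :=
  TopologicalSpace.induced
    (fun X : SubshiftSpace => (fun n => Lang n X.carrier : ℕ → Set (List ℤ)))
    (@Pi.topologicalSpace ℕ (fun _ => Set (List ℤ)) (fun _ => ⊥))

/-- The subset `𝐌 ⊆ 𝐒` of infinite minimal subshifts. -/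
def MinimalSet : Set SubshiftSpace :=
  {X | X.carrier.Infinite ∧ ∀ x ∈ X.carrier, X.carrier ⊆ closure (orbit x)}

/-!
Coarsen the period structure to every other period, preceded by `1`: this gives periods
`q 0 = 1 ∣ q 1 ∣ q 2 ∣ ⋯` with `q (n + 1) ≥ 3 q n`, and for each `n` a single residue class
(the hole) modulo `q n` outside of which `x` is `q n`-periodic. Cutting `x` into blocks of length
`q n` placed so that each level-`n` hole sits in the level-`(n - 1)` block of index `1`, every
level-`(n + 1)` block is the same word of level-`n` blocks except at that index, which carries
the letter filling the hole. This is a constant-length directive sequence over `{0, 1}` at every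
level; it is proper because index `1` is neither the first nor the last, and primitive because,
`x` being aperiodic, both letters occur in every hole class. Recognizability holds because a
representation read at a wrong phase would code a constant sequence.
-/
section Words

lemma factorAt_eq_map (x : ℤ → A) (i : ℤ) (n : ℕ) :
    factorAt x i n = (List.range n).map fun j : ℕ => x (i + j) := by
  simp [factorAt, ← List.map_eq_flatMap, Function.comp_def]

@[simp] lemma length_factorAt (x : ℤ → A) (i : ℤ) (n : ℕ) : (factorAt x i n).length = n := by
  simp [factorAt_eq_map]

lemma getElem_factorAt (x : ℤ → A) (i : ℤ) {n j : ℕ} (hj : j < n) :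
    (factorAt x i n)[j]'(by simpa using hj) = x (i + j) := by
  simp [factorAt_eq_map]

lemma factorAt_eq_factorAt_iff {x y : ℤ → A} {i i' : ℤ} {n : ℕ} :
    factorAt x i n = factorAt y i' n ↔ ∀ j < n, x (i + j) = y (i' + j) := by
  simp [factorAt_eq_map, List.map_inj_left]

lemma factorAt_shiftBy (x : ℤ → A) (k i : ℤ) (n : ℕ) :
    factorAt (shiftBy k x) i n = factorAt x (i + k) n :=
  factorAt_eq_factorAt_iff.2 fun j _ => by simp only [shiftBy]; ring_nf

lemma factorAt_append (x : ℤ → A) (i : ℤ) (a b : ℕ) :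
    factorAt x i a ++ factorAt x (i + a) b = factorAt x i (a + b) := by
  simp [factorAt_eq_map, List.range_add, add_assoc]

lemma factorAt_isInfix (x : ℤ → A) (i : ℤ) {d m N : ℕ} (h : d + m ≤ N) :
    factorAt x (i + d) m <:+: factorAt x i N := by
  refine ⟨factorAt x i d, factorAt x (i + d + m) (N - (d + m)), ?_⟩
  rw [factorAt_append, add_assoc, ← Nat.cast_add, factorAt_append]
  congr
  omega

lemma exists_eq_factorAt_of_isInfix {x : ℤ → A} {w : List A} {i : ℤ} {N : ℕ}
    (h : w <:+: factorAt x i N) : ∃ d : ℕ, w = factorAt x (i + d) w.length := by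
  obtain ⟨d, hd, hget⟩ := List.infix_iff_getElem?.1 h
  rw [length_factorAt] at hd
  refine ⟨d, List.ext_getElem (by simp) fun j hj _ => ?_⟩
  have := hget j hj
  rw [List.getElem?_eq_getElem (by simp; omega), Option.some_inj, getElem_factorAt _ _ (by omega)]
    at this
  rw [← this, getElem_factorAt _ _ (by omega)]
  push_cast
  ring_nf

lemma flatMap_map_range {α β : Type*} (F : ℕ → α) (G : α → List β) (f : ℕ → β) {a b : ℕ}
    (h : ∀ i < a, G (F i) = (List.range b).map fun j => f (i * b + j)) :
    ((List.range a).map F).flatMap G = (List.range (a * b)).map f := by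
  induction a with
  | zero => simp
  | succ a ih =>
    rw [List.range_succ, List.map_append, List.flatMap_append, ih fun i hi => h i (by omega),
      add_mul, one_mul, List.range_add, List.map_append, List.map_map]
    simp [h a (by omega), Function.comp_def]

end Words

section PerSet

lemma apply_add_of_mem_perSet {x : ℤ → A} {p : ℕ} {i d : ℤ} (h : i ∈ PerSet x p)
    (hd : (p : ℤ) ∣ d) : x (i + d) = x i := by
  obtain ⟨k, rfl⟩ := hd
  simpa [mul_comm] using h k

lemma add_mem_perSet {x : ℤ → A} {p : ℕ} {i d : ℤ} (h : i ∈ PerSet x p) (hd : (p : ℤ) ∣ d) :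
    i + d ∈ PerSet x p := fun _ => by
  rw [add_assoc, apply_add_of_mem_perSet h (dvd_add hd (dvd_mul_left _ _)),
    apply_add_of_mem_perSet h hd]

lemma perSet_mono {x : ℤ → A} {p p' : ℕ} (h : p ∣ p') : PerSet x p ⊆ PerSet x p' :=
  fun _ hi _ => apply_add_of_mem_perSet hi (dvd_mul_of_dvd_right (Int.natCast_dvd_natCast.2 h) _)

end PerSet

lemma exists_mem_Ico_dvd_add {R : ℕ} (hR : 0 < R) (o : ℕ) (E : ℤ) :
    ∃ j : ℕ, o ≤ j ∧ j < o + R ∧ (R : ℤ) ∣ E + j := by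
  have h₀ := Int.emod_nonneg (-(E + o)) (by omega : (R : ℤ) ≠ 0)
  have h₁ := Int.emod_lt_of_pos (-(E + o)) (by omega : (0 : ℤ) < R)
  refine ⟨o + (-(E + o) % R).toNat, by omega, by omega, ⟨-(-(E + o) / R), ?_⟩⟩
  have := Int.emod_add_mul_ediv (-(E + o)) R
  push_cast
  rw [Int.toNat_of_nonneg h₀]
  linarith

lemma IsConcat.apply_mul_add {σ : B → List C} {y : ℤ → B} {z : ℤ → C} {L : ℕ}
    (h : IsConcat σ y z) (hL : ∀ b, (σ b).length = L) (j : ℤ) {i : ℕ} (hi : i < L) :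
    z (j * L + i) = (σ (y j))[i]'((hL _).symm ▸ hi) := by
  obtain ⟨c, hc₀, hc, hz⟩ := h
  have hcj : ∀ j, c j = j * L := fun j => by
    induction j using Int.induction_on with
    | zero => simp [hc₀]
    | succ j ih => rw [hc, ih, hL]; ring
    | pred j ih =>
      have := hc (-j - 1)
      rw [sub_add_cancel, ih, hL] at this
      linarith
  rw [← hcj]
  exact hz j ⟨i, (hL _).symm ▸ hi⟩

lemma self_mem_closure_orbit [TopologicalSpace A] (x : ℤ → A) : x ∈ closure (orbit x) :=
  subset_closure ⟨0, funext fun i => by simp [shiftBy]⟩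

section Closure

variable [TopologicalSpace A] [DiscreteTopology A]

lemma isOpen_setOf_factorAt_eq (y : ℤ → A) (i : ℤ) (m : ℕ) :
    IsOpen {z : ℤ → A | factorAt z i m = factorAt y i m} := by
  simp only [factorAt_eq_factorAt_iff, ← Finset.mem_range, ofPred_forall]
  exact isOpen_biInter_finset fun j _ =>
    (continuous_apply (A := fun _ : ℤ => A) (i + j)).isOpen_preimage {y (i + j)} (isOpen_discrete _)

lemma mem_closure_iff_factorAt {S : Set (ℤ → A)} {y : ℤ → A} :
    y ∈ closure S ↔ ∀ (i : ℤ) (m : ℕ), ∃ z ∈ S, factorAt y i m = factorAt z i m := by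
  refine ⟨fun h i m => ?_, fun h => mem_closure_iff.2 fun O hO hyO => ?_⟩
  · obtain ⟨z, hz, hzS⟩ := mem_closure_iff.1 h _ (isOpen_setOf_factorAt_eq y i m) rfl
    exact ⟨z, hzS, hz.symm⟩
  obtain ⟨I, u, hu, hIO⟩ := isOpen_pi_iff.1 hO y hyO
  set N : ℕ := I.sup Int.natAbs
  have hI : ∀ p ∈ I, -(N : ℤ) ≤ p ∧ p ≤ N := fun p hp => by
    have := Finset.le_sup (f := Int.natAbs) hp
    rcases Int.natAbs_eq p with h | h <;> omega
  obtain ⟨z, hzS, hz⟩ := h (-N) (2 * N + 1)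
  refine ⟨z, hIO fun p hp => ?_, hzS⟩
  have hp' := hI p hp
  have := factorAt_eq_factorAt_iff.1 hz (p + N).toNat (by omega)
  rw [show -(N : ℤ) + (p + N).toNat = p by omega] at this
  exact this ▸ (hu p hp).2

lemma mem_closure_orbit_iff {x y : ℤ → A} :
    y ∈ closure (orbit x) ↔ ∀ (i : ℤ) (m : ℕ), ∃ k, factorAt y i m = factorAt x k m := by
  rw [mem_closure_iff_factorAt]
  refine forall₂_congr fun i m => ⟨?_, fun ⟨k, hk⟩ => ⟨shiftBy (k - i) x, ⟨k - i, rfl⟩, ?_⟩⟩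
  · rintro ⟨_, ⟨k, rfl⟩, hk⟩
    exact ⟨i + k, hk.trans (factorAt_shiftBy x k i m)⟩
  · rwa [factorAt_shiftBy, add_sub_cancel]

end Closure

/-- The hole of level `n` is the residue class of `hole n` modulo `q n`; `q 0 = 1` makes level `0`
the level of the letters of `x`. -/
structure SingleHoleData (A : Type*) where
  x : ℤ → A
  q : ℕ → ℕ
  hole : ℕ → ℤ
  q_zero : q 0 = 1
  q_dvd_q_succ : ∀ n, q n ∣ q (n + 1)
  three_mul_q_le : ∀ n, 3 * q n ≤ q (n + 1)
  mem_perSet_of_not_dvd : ∀ n i, ¬ (q n : ℤ) ∣ i - hole n → i ∈ PerSet x (q n)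
  dvd_hole_succ_sub : ∀ n, (q n : ℤ) ∣ hole (n + 1) - hole n
  exists_mem_perSet : ∀ i, ∃ n, i ∈ PerSet x (q n)
  exists_apply_eq : ∀ n (a : A), ∃ c, (q n : ℤ) ∣ c - hole n ∧ x c = a

namespace SingleHoleData

variable (D : SingleHoleData A)

lemma q_pos (n : ℕ) : 0 < D.q n := by
  induction n with
  | zero => simp [D.q_zero]
  | succ n ih => linarith [D.three_mul_q_le n]

lemma strictMono_q : StrictMono D.q :=
  strictMono_nat_of_lt_succ fun n => by linarith [D.three_mul_q_le n, D.q_pos n]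

lemma q_dvd_q {n m : ℕ} (h : n ≤ m) : D.q n ∣ D.q m :=
  Nat.rel_of_forall_rel_succ_of_le (· ∣ ·) D.q_dvd_q_succ h

lemma intCast_q_dvd_q {n m : ℕ} (h : n ≤ m) : (D.q n : ℤ) ∣ D.q m :=
  Int.natCast_dvd_natCast.2 (D.q_dvd_q h)

lemma dvd_hole_sub {n m : ℕ} (h : n ≤ m) : (D.q n : ℤ) ∣ D.hole m - D.hole n := by
  induction m, h using Nat.le_induction with
  | base => simp
  | succ m hnm ih =>
    rw [← sub_add_sub_cancel]
    exact dvd_add ((D.intCast_q_dvd_q hnm).trans (D.dvd_hole_succ_sub m)) ih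

/-- Position of the hole inside a block of level `n`. -/
def offset (n : ℕ) : ℤ := ∑ k ∈ Finset.range n, (D.q k : ℤ)

lemma offset_succ (n : ℕ) : D.offset (n + 1) = D.offset n + D.q n :=
  Finset.sum_range_succ _ _

lemma offset_nonneg (n : ℕ) : 0 ≤ D.offset n :=
  Finset.sum_nonneg fun _ _ => Int.natCast_nonneg _

lemma offset_lt_q (n : ℕ) : D.offset n < D.q n := by
  induction n with
  | zero => simp [offset, D.q_zero]
  | succ n ih =>
    have := D.three_mul_q_le n
    rw [offset_succ]
    omega

lemma dvd_offset_sub {n m : ℕ} (h : n ≤ m) : (D.q n : ℤ) ∣ D.offset m - D.offset n := by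
  induction m, h using Nat.le_induction with
  | base => simp
  | succ m hnm ih =>
    rw [offset_succ, add_sub_right_comm]
    exact dvd_add ih (D.intCast_q_dvd_q hnm)

/-- Blocks of level `n` occupy the intervals `[cut n + k * q n, cut n + (k + 1) * q n)`. -/
def cut (n : ℕ) : ℤ := D.hole n - D.offset n

lemma dvd_cut_sub {n m : ℕ} (h : n ≤ m) : (D.q n : ℤ) ∣ D.cut m - D.cut n := by
  rw [cut, cut, sub_sub_sub_comm]
  exact dvd_sub (D.dvd_hole_sub h) (D.dvd_offset_sub h)

lemma not_dvd_sub_offset {n : ℕ} {p : ℤ} (hp₀ : 0 ≤ p) (hp : p < D.q n) (hne : p ≠ D.offset n) :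
    ¬ (D.q n : ℤ) ∣ p - D.offset n := fun hdvd => by
  have := D.offset_nonneg n
  have := D.offset_lt_q n
  have := Int.eq_zero_of_abs_lt_dvd hdvd (abs_lt.2 ⟨by linarith, by linarith⟩)
  exact hne (by linarith)

lemma cut_add_mem_perSet {n : ℕ} {p : ℤ} (hp₀ : 0 ≤ p) (hp : p < D.q n) (hne : p ≠ D.offset n) :
    D.cut n + p ∈ PerSet D.x (D.q n) :=
  D.mem_perSet_of_not_dvd n _ <| by
    simpa [cut, sub_add_comm] using D.not_dvd_sub_offset hp₀ hp hne

/-- The letter at position `p` of the level-`m` block of `x` whose hole is filled with `a`. -/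
def fill (m : ℕ) (a : A) (p : ℤ) : A := if p = D.offset m then a else D.x (D.cut m + p)

lemma fill_offset (m : ℕ) (a : A) : D.fill m a (D.offset m) = a := if_pos rfl

lemma fill_mul_add {n m : ℕ} (h : n ≤ m) (a : A) (i : ℤ) {p : ℤ} (hp₀ : 0 ≤ p)
    (hp : p < D.q n) :
    D.fill m a (i * D.q n + p) = D.fill n (D.fill m a (i * D.q n + D.offset n)) p := by
  by_cases hpo : p = D.offset n
  · rw [hpo, fill_offset]
  have hne : i * D.q n + p ≠ D.offset m := fun heq => D.not_dvd_sub_offset hp₀ hp hpo <| by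
    rw [show p - D.offset n = D.offset m - D.offset n - i * D.q n by linarith]
    exact dvd_sub (D.dvd_offset_sub h) (dvd_mul_left _ _)
  rw [fill, if_neg hne, fill, if_neg hpo, ← apply_add_of_mem_perSet
    (D.cut_add_mem_perSet hp₀ hp hpo) (dvd_add (D.dvd_cut_sub h) (dvd_mul_left _ i))]
  ring_nf

def ratio (n m : ℕ) : ℕ := D.q m / D.q n

lemma ratio_mul_q {n m : ℕ} (h : n ≤ m) : D.ratio n m * D.q n = D.q m :=
  Nat.div_mul_cancel (D.q_dvd_q h)

lemma ratio_mul_ratio {n m l : ℕ} (h₁ : n ≤ m) (h₂ : m ≤ l) :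
    D.ratio m l * D.ratio n m = D.ratio n l :=
  Nat.eq_of_mul_eq_mul_right (D.q_pos n) <| by
    rw [mul_assoc, D.ratio_mul_q h₁, D.ratio_mul_q h₂, D.ratio_mul_q (h₁.trans h₂)]

lemma mul_q_add_offset_lt {n m j : ℕ} (h : n ≤ m) (hj : j < D.ratio n m) :
    (j : ℤ) * D.q n + D.offset n < D.q m := by
  have hjq : ((j + 1 : ℕ) : ℤ) * D.q n ≤ D.q m := by
    exact_mod_cast (Nat.mul_le_mul_right _ hj).trans (D.ratio_mul_q h).le
  push_cast at hjq
  linarith [D.offset_lt_q n]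

/-- The letter at the hole of the `j`-th level-`n` block inside the level-`m` block filled
with `a`. -/
def letter (n m : ℕ) (a : A) (j : ℕ) : A := D.fill m a (j * D.q n + D.offset n)

/-- The level-`m` block filled with `a`, written as a word over level-`n` blocks. -/
def block (n m : ℕ) (a : A) : List A := (List.range (D.ratio n m)).map (D.letter n m a)

@[simp] lemma length_block (n m : ℕ) (a : A) : (D.block n m a).length = D.ratio n m := by
  simp [block]

lemma block_self (n : ℕ) (a : A) : D.block n n a = [a] := by
  rw [block, ratio, Nat.div_self (D.q_pos n)]
  simp [letter, fill_offset]

lemma letter_mul_add {n m l : ℕ} (h₁ : n ≤ m) (h₂ : m ≤ l) (a : A) (i : ℕ) {j : ℕ}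
    (hj : j < D.ratio n m) :
    D.letter n l a (i * D.ratio n m + j) = D.letter n m (D.letter m l a i) j := by
  have hq : (D.ratio n m : ℤ) * D.q n = D.q m := by exact_mod_cast D.ratio_mul_q h₁
  rw [letter, letter, letter, ← D.fill_mul_add h₂ a i (by positivity [D.offset_nonneg n])
    (D.mul_q_add_offset_lt h₁ hj), ← hq]
  push_cast
  ring_nf

lemma flatMap_block {n m l : ℕ} (h₁ : n ≤ m) (h₂ : m ≤ l) (a : A) :
    (D.block m l a).flatMap (D.block n m) = D.block n l a := by
  rw [block, flatMap_map_range _ _ (D.letter n l a), D.ratio_mul_ratio h₁ h₂, block]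
  exact fun i _ => List.map_congr_left fun j hj =>
    (D.letter_mul_add h₁ h₂ a i (List.mem_range.1 hj)).symm

def τ : ∀ n : ℕ, (fun _ : ℕ => A) (n + 1) → List ((fun _ : ℕ => A) n) :=
  fun n => D.block n (n + 1)

lemma sadicWordAux_τ (n k : ℕ) (a : A) :
    sadicWordAux (A := fun _ => A) D.τ n k a = D.block n (n + k) a := by
  induction k generalizing a with
  | zero => exact (D.block_self n a).symm
  | succ k ih =>
    simp only [sadicWordAux, funext ih]
    exact D.flatMap_block (by omega) (by omega) a

lemma apply_cut_add_mul_add (m : ℕ) (k : ℤ) {p : ℤ} (hp₀ : 0 ≤ p) (hp : p < D.q m) :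
    D.x (D.cut m + k * D.q m + p) = D.fill m (D.x (D.hole m + k * D.q m)) p := by
  by_cases hpo : p = D.offset m
  · rw [hpo, fill_offset, cut]
    ring_nf
  rw [fill, if_neg hpo, add_right_comm, apply_add_of_mem_perSet
    (D.cut_add_mem_perSet hp₀ hp hpo) (dvd_mul_left _ _)]

lemma factorAt_cut_add_mul (m : ℕ) (k : ℤ) :
    factorAt D.x (D.cut m + k * D.q m) (D.q m) = D.block 0 m (D.x (D.hole m + k * D.q m)) := by
  simp only [factorAt_eq_map, block, ratio, D.q_zero, Nat.div_one]
  refine List.map_congr_left fun j hj => ?_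
  simpa [letter, offset, D.q_zero] using D.apply_cut_add_mul_add m k (Int.natCast_nonneg j)
    (Int.ofNat_lt.2 (List.mem_range.1 hj))

lemma exists_factorAt_eq_block (m : ℕ) (a : A) : ∃ i, factorAt D.x i (D.q m) = D.block 0 m a := by
  obtain ⟨c, ⟨k, hk⟩, rfl⟩ := D.exists_apply_eq m a
  refine ⟨D.cut m + k * D.q m, ?_⟩
  rw [factorAt_cut_add_mul, ← sub_add_cancel c (D.hole m), hk, mul_comm, add_comm]

lemma letter_of_ne {n m : ℕ} {a : A} {j : ℕ} (hj : (j : ℤ) * D.q n + D.offset n ≠ D.offset m) :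
    D.letter n m a j = D.x (D.cut m + (j * D.q n + D.offset n)) := if_neg hj

lemma exists_letter_eq (n : ℕ) (b : A) :
    ∃ G, ∀ m, n ≤ m → ∀ (a : A) (o : ℕ), ∃ j, o ≤ j ∧ j < o + G ∧ D.letter n m a j = b := by
  obtain ⟨c, hc, rfl⟩ := D.exists_apply_eq n b
  obtain ⟨M₀, hM₀⟩ := D.exists_mem_perSet c
  set M := max M₀ n
  have hcM : c ∈ PerSet D.x (D.q M) := perSet_mono (D.q_dvd_q (le_max_left _ _)) hM₀
  have hR : (D.ratio n M : ℤ) * D.q n = D.q M := by exact_mod_cast D.ratio_mul_q (le_max_right _ _)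
  have hRpos : 0 < D.ratio n M := Nat.pos_of_ne_zero fun h0 => by
    have := D.q_pos M
    simp [h0] at hR
    omega
  refine ⟨2 * D.ratio n M, fun m hm a o => ?_⟩
  obtain ⟨E, hE⟩ : (D.q n : ℤ) ∣ D.cut m + D.offset n - c := by
    rw [show D.cut m + D.offset n - c = (D.cut m - D.cut n) - (c - D.hole n) by simp [cut]; ring]
    exact dvd_sub (D.dvd_cut_sub hm) hc
  -- `c` is `q M`-periodic, so every level-`n` hole at an index `≡ -E` modulo `ratio n M`
  -- carries `x c`; of two such indices `ratio n M` apart, at most one is the level-`m` hole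
  have key : ∀ j : ℕ, (D.ratio n M : ℤ) ∣ E + j → (j : ℤ) * D.q n + D.offset n ≠ D.offset m →
      D.letter n m a j = D.x c := fun j ⟨e, he⟩ hj => by
    rw [D.letter_of_ne hj, ← apply_add_of_mem_perSet hcM ⟨e, rfl⟩, ← hR]
    congr 1
    linear_combination hE + D.q n * he
  obtain ⟨j, hoj, hjo, hjE⟩ := exists_mem_Ico_dvd_add hRpos o E
  by_cases hj : (j : ℤ) * D.q n + D.offset n = D.offset m
  · refine ⟨j + D.ratio n M, by omega, by omega, key _ ?_ fun h' => ?_⟩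
    · push_cast
      rw [← add_assoc]
      exact dvd_add hjE dvd_rfl
    · have := D.q_pos n
      push_cast at h'
      nlinarith
  · exact ⟨j, hoj, by omega, key j hjE hj⟩

lemma exists_forall_mem_perSet (i : ℤ) (m : ℕ) :
    ∃ M, m ≤ D.q M ∧ ∀ j < m, i + j ∈ PerSet D.x (D.q M) := by
  choose N hN using fun j : ℕ => D.exists_mem_perSet (i + j)
  refine ⟨max ((Finset.range m).sup N) m, (le_max_right _ _).trans (D.strictMono_q.id_le _),
    fun j hj => perSet_mono (D.q_dvd_q ?_) (hN j)⟩
  exact (Finset.le_sup (Finset.mem_range.2 hj)).trans (le_max_left _ _)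

lemma exists_isInfix_block (i : ℤ) (m : ℕ) :
    ∃ M a, 0 < M ∧ factorAt D.x i m <:+: D.block 0 M a := by
  obtain ⟨M, hmM, hper⟩ := D.exists_forall_mem_perSet i m
  have hqM := D.q_pos M
  set r := (i - D.cut (M + 1)) % D.q M
  have hr₀ : 0 ≤ r := Int.emod_nonneg _ (by omega)
  have hrq : r < D.q M := Int.emod_lt_of_pos _ (by omega)
  have hshift : factorAt D.x i m = factorAt D.x (D.cut (M + 1) + r.toNat) m := by
    have hd : (D.q M : ℤ) ∣ D.cut (M + 1) + r - i :=
      ⟨-((i - D.cut (M + 1)) / D.q M), by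
        linarith [Int.emod_add_mul_ediv (i - D.cut (M + 1)) (D.q M)]⟩
    refine factorAt_eq_factorAt_iff.2 fun j hj => ?_
    rw [Int.toNat_of_nonneg hr₀, ← apply_add_of_mem_perSet (hper j hj) hd]
    ring_nf
  refine ⟨M + 1, D.x (D.hole (M + 1)), M.succ_pos, ?_⟩
  have hblock := D.factorAt_cut_add_mul (M + 1) 0
  simp only [zero_mul, add_zero] at hblock
  rw [hshift, ← hblock]
  exact factorAt_isInfix _ _ (by have := D.three_mul_q_le M; omega)

lemma XLevel_zero [TopologicalSpace A] [DiscreteTopology A] :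
    XLevel (A := fun _ => A) D.τ 0 = closure (orbit D.x) := by
  ext y
  rw [mem_closure_orbit_iff]
  refine ⟨fun hy i m => ?_, fun hy i m => ?_⟩
  · obtain ⟨k, -, a, hinf⟩ := hy i m
    rw [sadicWordAux_τ, zero_add] at hinf
    obtain ⟨p, hp⟩ := D.exists_factorAt_eq_block k a
    obtain ⟨d, hd⟩ := exists_eq_factorAt_of_isInfix (hp ▸ hinf)
    exact ⟨p + d, by simpa using hd⟩
  · obtain ⟨k, hk⟩ := hy i m
    obtain ⟨M, a, hM, hinf⟩ := D.exists_isInfix_block k m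
    exact ⟨M, hM, a, by rwa [sadicWordAux_τ, zero_add, hk]⟩

lemma three_le_ratio_succ (n : ℕ) : 3 ≤ D.ratio n (n + 1) :=
  (Nat.le_div_iff_mul_le (D.q_pos n)).2 (D.three_mul_q_le n)

lemma exists_lt_le_ratio (n G : ℕ) : ∃ M, n < M ∧ G ≤ D.ratio n M := by
  refine ⟨G * D.q n + n + 1, by omega, (Nat.le_div_iff_mul_le (D.q_pos n)).2 ?_⟩
  have := D.strictMono_q.id_le (G * D.q n + n + 1)
  simp only [id] at this
  omega

lemma getElem?_block {n m j : ℕ} (a : A) (hj : j < D.ratio n m) :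
    (D.block n m a)[j]? = some (D.letter n m a j) := by
  simp [block, hj]

lemma letter_succ_one (n : ℕ) (a : A) : D.letter n (n + 1) a 1 = a := by
  rw [letter, Nat.cast_one, one_mul, add_comm (_ : ℤ), ← offset_succ, fill_offset]

lemma letter_succ_of_ne_one {n j : ℕ} (a : A) (hj : j ≠ 1) :
    D.letter n (n + 1) a j = D.x (D.cut (n + 1) + (j * D.q n + D.offset n)) := by
  refine D.letter_of_ne fun h => hj ?_
  rw [offset_succ, add_comm (D.offset n), add_left_inj] at h
  exact_mod_cast mul_right_cancel₀ (by exact_mod_cast (D.q_pos n).ne') (h.trans (one_mul _).symm)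

lemma nonErasing : NonErasing (A := fun _ => A) D.τ := fun n a h => by
  have := congrArg List.length h
  rw [τ, length_block, List.length_nil] at this
  linarith [D.three_le_ratio_succ n]

lemma constantLength : ConstantLength (A := fun _ => A) D.τ := fun n a b => by
  simp [τ]

lemma properSeq : ProperSeq (A := fun _ => A) D.τ := fun n => by
  have := D.three_le_ratio_succ n
  refine ⟨D.x (D.cut (n + 1) + ((0 : ℕ) * D.q n + D.offset n)),
    D.x (D.cut (n + 1) + ((D.ratio n (n + 1) - 1 : ℕ) * D.q n + D.offset n)), fun a => ⟨?_, ?_⟩⟩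
  · rw [List.head?_eq_getElem?, τ, D.getElem?_block a (by omega),
      D.letter_succ_of_ne_one a zero_ne_one]
  · rw [List.getLast?_eq_getElem?, τ, length_block, D.getElem?_block a (by omega),
      D.letter_succ_of_ne_one a (by omega)]

lemma primitiveSeq [Fintype A] : PrimitiveSeq (A := fun _ => A) D.τ := fun n => by
  choose G hG using D.exists_letter_eq n
  obtain ⟨M, hnM, hM⟩ := D.exists_lt_le_ratio n (Finset.univ.sup G)
  refine ⟨M - n, by omega, fun a b => ?_⟩
  rw [sadicWordAux_τ, Nat.add_sub_cancel' hnM.le]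
  obtain ⟨j, -, hj, hjb⟩ := hG b M hnM.le a 0
  have := Finset.le_sup (f := G) (Finset.mem_univ b)
  exact List.mem_map.2 ⟨j, List.mem_range.2 (by omega), hjb⟩

lemma const_not_mem_XLevel [Nontrivial A] (n : ℕ) (c : A) :
    (fun _ => c) ∉ XLevel (A := fun _ => A) D.τ n := fun hc => by
  obtain ⟨b, hb⟩ := exists_ne c
  obtain ⟨G, hG⟩ := D.exists_letter_eq n b
  obtain ⟨k, -, a, hinf⟩ := hc 0 G
  rw [sadicWordAux_τ] at hinf
  obtain ⟨d, hd, hget⟩ := List.infix_iff_getElem?.1 hinf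
  rw [length_factorAt, length_block] at hd
  obtain ⟨j, hdj, hjd, hj⟩ := hG (n + k) (by omega) a d
  have := hget (j - d) (by simp; omega)
  rw [Nat.sub_add_cancel hdj, D.getElem?_block a (by omega), hj] at this
  simp [factorAt_eq_map] at this
  exact hb this

lemma apply_eq_letter_of_isConcat {n : ℕ} {y : ℤ → A} {z : ℤ → A}
    (h : IsConcat (D.τ n) y z) (j : ℤ) {i : ℕ} (hi : i < D.ratio n (n + 1)) :
    z (j * D.ratio n (n + 1) + i) = D.letter n (n + 1) (y j) i := by
  rw [h.apply_mul_add (fun b => D.length_block n (n + 1) b) j hi]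
  simp [τ, block]

/-- Only the letter at index `1` of `τ n a` depends on `a`: reading a representation at a wrong
phase would make the coded sequence constant. -/
lemma recognizableSeq [Nontrivial A] : RecognizableSeq (A := fun _ => A) D.τ := by
  rintro n z y y' k k' ⟨hy, hk, hc⟩ ⟨-, hk', hc'⟩
  set L := D.ratio n (n + 1)
  have hL := D.three_le_ratio_succ n
  have hkL : k < L := by simpa [τ] using hk
  have hk'L : k' < L := by simpa [τ] using hk'
  have hyz : ∀ {y : ℤ → A} {k : ℕ}, IsConcat (D.τ n) y (fun m => z (m - k)) →
      ∀ j, y j = z (j * L + 1 - k) := fun hc j => by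
    simpa [D.letter_succ_one] using (D.apply_eq_letter_of_isConcat hc j (by omega : 1 < L)).symm
  obtain rfl : k = k' := by
    by_contra hkk
    set r := (1 - k + k' : ℤ) % L
    have hr₀ : 0 ≤ r := Int.emod_nonneg _ (by omega)
    have hrL : r < L := Int.emod_lt_of_pos _ (by omega)
    have hr1 : r.toNat ≠ 1 := fun hr => hkk <| by
      have hdvd : (L : ℤ) ∣ k' - k := by
        have := Int.emod_add_mul_ediv (1 - k + k' : ℤ) L
        exact ⟨(1 - k + k' : ℤ) / L, by omega⟩
      have := Int.eq_zero_of_abs_lt_dvd hdvd (abs_lt.2 ⟨by omega, by omega⟩)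
      omega
    suffices hconst : y = fun _ => D.x (D.cut (n + 1) + (r.toNat * D.q n + D.offset n)) from
      D.const_not_mem_XLevel (n + 1) _ (hconst ▸ hy)
    funext j
    have hphase := D.apply_eq_letter_of_isConcat hc' (j + (1 - k + k' : ℤ) / L) (i := r.toNat)
      (by omega)
    rw [D.letter_succ_of_ne_one _ hr1] at hphase
    rw [hyz hc j, ← hphase]
    congr 1
    have := Int.emod_add_mul_ediv (1 - k + k' : ℤ) L
    rw [Int.toNat_of_nonneg hr₀]
    linarith
  exact ⟨funext fun j => by rw [hyz hc, hyz hc'], rfl⟩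

end SingleHoleData

theorem SingleHoleData.isStrongToeplitzOfRank {A : Type} [Fintype A] [Nontrivial A]
    [t : TopologicalSpace A] [DiscreteTopology A] (D : SingleHoleData A) :
    IsStrongToeplitzOfRank (closure (orbit D.x)) (Fintype.card A) := by
  have hX := D.XLevel_zero
  obtain rfl : t = ⊥ := DiscreteTopology.eq_bot
  let _ : TopologicalSpace A := ⊥
  exact ⟨fun _ => A, fun _ => inferInstance, D.τ, D.nonErasing, D.constantLength,
    D.primitiveSeq, D.properSeq, D.recognizableSeq, fun N => ⟨N, le_rfl, le_rfl⟩,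
    Homeomorph.setCongr hX.symm, fun _ _ _ => rfl⟩

section SingleHoles

lemma SingleHoles.exists_hole {x : ℤ → A} {P : ℕ → ℕ} (h : SingleHoles x P) (n : ℕ) :
    ∃ c, c ∉ PerSet x (P n) ∧ ∀ i ∉ PerSet x (P n), (P n : ℤ) ∣ i - c := by
  obtain ⟨c, ⟨-, -, hc⟩, huniq⟩ := h.2 n
  have hP : (0 : ℤ) < P n := by have := (h.1.2.1 n).1; omega
  refine ⟨c, hc, fun i hi => ?_⟩
  have hr : i % P n ∉ PerSet x (P n) := fun hr => hi <| by
    simpa using add_mem_perSet hr (Int.dvd_self_sub_emod (x := i) (m := P n))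
  rw [← huniq _ ⟨Int.emod_nonneg _ hP.ne', Int.emod_lt_of_pos _ hP, hr⟩]
  exact Int.dvd_self_sub_emod

lemma exists_apply_eq_of_not_isPeriodicPoint {x : ℤ → Bool} (hx : ¬ IsPeriodicPoint x) {p : ℕ}
    (hp : 0 < p) {c : ℤ} (hper : ∀ i, ¬ (p : ℤ) ∣ i - c → i ∈ PerSet x p) (b : Bool) :
    ∃ i, (p : ℤ) ∣ i - c ∧ x i = b := by
  by_contra! hb
  refine hx ⟨p, hp, fun i => ?_⟩
  by_cases hi : (p : ℤ) ∣ i - c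
  · have hip : (p : ℤ) ∣ i + p - c := by
      rw [add_sub_right_comm]
      exact dvd_add hi dvd_rfl
    rw [Bool.eq_not_iff.2 (hb i hi), Bool.eq_not_iff.2 (hb (i + p) hip)]
  · simpa using hper i hi 1

lemma two_mul_le_of_dvd_of_lt {a b : ℕ} (h : a ∣ b) (hab : a < b) : 2 * a ≤ b := by
  obtain ⟨_ | _ | c, rfl⟩ := h
  · simp at hab
  · simp at hab
  · nlinarith

def consOdd {α : Type*} (a : α) (f : ℕ → α) : ℕ → α
  | 0 => a
  | n + 1 => f (2 * n + 1)

lemma SingleHoles.exists_singleHoleData {x : ℤ → Bool} {P : ℕ → ℕ} (h : SingleHoles x P)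
    (hx : ¬ IsPeriodicPoint x) : ∃ D : SingleHoleData Bool, D.x = x := by
  obtain ⟨hmono, hess, hdvd, hcover⟩ := h.1
  choose c hc hcdvd using h.exists_hole
  have hPdvd := Nat.rel_of_forall_rel_succ_of_le (· ∣ ·) hdvd
  have hP2 : ∀ n, 2 * P n ≤ P (n + 1) := fun n =>
    two_mul_le_of_dvd_of_lt (hdvd n) (hmono n.lt_succ_self)
  have hqpos : ∀ n, 0 < consOdd 1 P n := by
    rintro (_ | n)
    · exact one_pos
    · exact (hess _).1.le.trans_lt' one_pos
  have hper : ∀ n i, ¬ ((consOdd 1 P n : ℕ) : ℤ) ∣ i - consOdd 0 c n →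
      i ∈ PerSet x (consOdd 1 P n) := by
    rintro (_ | n) i hi
    · simp [consOdd] at hi
    · exact not_not.1 (mt (hcdvd _ i) hi)
  refine ⟨{ x, q := consOdd 1 P, hole := consOdd 0 c, q_zero := rfl
            q_dvd_q_succ := ?_, three_mul_q_le := ?_, mem_perSet_of_not_dvd := hper
            dvd_hole_succ_sub := ?_, exists_mem_perSet := ?_
            exists_apply_eq := fun n =>
              exists_apply_eq_of_not_isPeriodicPoint hx (hqpos n) (hper n) }, rfl⟩
  · rintro (_ | n)
    · exact one_dvd _
    · exact hPdvd (by omega)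
  · rintro (_ | n)
    · show 3 * 1 ≤ P 1
      linarith [hP2 0, (hess 0).1]
    · show 3 * P (2 * n + 1) ≤ P (2 * n + 2 + 1)
      linarith [hP2 (2 * n + 1), hP2 (2 * n + 2), (hess (2 * n + 1)).1]
  · rintro (_ | n)
    · simp [consOdd]
    · exact hcdvd _ _ fun h' => hc _ (perSet_mono (hPdvd (by omega)) h')
  · intro i
    obtain ⟨n, hn⟩ := hcover i
    exact ⟨n + 1, perSet_mono (hPdvd (by omega)) hn⟩

end SingleHoles

theorem statement16_general (X : Set (ℤ → Bool))
    (hap : ∀ x ∈ X, IsAperiodicPoint x) (hsh : HasSingleHoles X) :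
    IsStrongToeplitzOfRank X 2 := by
  obtain ⟨x, P, ⟨-, rfl⟩, hP⟩ := hsh
  obtain ⟨D, rfl⟩ := hP.exists_singleHoleData (hap x (self_mem_closure_orbit x))
  exact D.isStrongToeplitzOfRank

/-- Every aperiodic Toeplitz subshift over `{0,1}` with single holes is
a strong Toeplitz subshift of rank 2. -/
theorem statement16 (X : Set (ℤ → Bool)) (hX : IsToeplitzSubshift X)
    (hap : ∀ x ∈ X, IsAperiodicPoint x) (hsh : HasSingleHoles X) :
    IsStrongToeplitzOfRank X 2 :=
  statement16_general X hap hsh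

end ToeplitzFR
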